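/- (Dimension-free inverse bound.) Let 𝒯 be a tree satisfying the geometric decay condition with parameter 0 < ρ < 1, let 0 < τ ≤ 1, α > 0, and 1/τ = α + 1/p. Suppose f = Σ_{Ω∈𝒯} ψ_Ω (the telescopic wavelet expansion). Then |f|^τ_{B̃_τ^{α,1}(𝒯)} ≤ C(α, τ, ρ) · N_τ(f,𝒯)^τ, where C does not depend on the ambient dimension n. -/

import Mathlib

/-!
For `x` in a cell `Ω`, the expansion `f = Σ ψ_{Ω'}` telescopes along the ancestors of `Ω`, so
`f x - E⃗_Ω` is the sum of the wavelets of the proper descendants of `Ω`; as `τ ≤ 1`, `‖·‖^τ` is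
subadditive and `w₁(f,Ω)_τ^τ ≤ Σ_{Ω' ⊊ Ω} ‖ψ_{Ω'}‖_τ^τ`. After exchanging the sums, a descendant
`Ω'` lying `k + 1` levels below `Ω` carries the weight `|Ω|^{-ατ} |Ω'| ≤ ρ^{(k+1)ατ} |Ω'|^{τ/p}`
(from `|Ω'| ≤ ρ^{k+1} |Ω|` and `1 - ατ = τ/p`), and the geometric series over the ancestors of
`Ω'` gives the dimension-free constant `ρ^{ατ} / (1 - ρ^{ατ})`.
-/

open MeasureTheory
open scoped ENNReal

/-- The mean `E⃗_Ω` of `f` over `Ω`. -/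
noncomputable def cellMean {n d : ℕ} (f : (Fin n → ℝ) → EuclideanSpace ℝ (Fin d))
    (Ω : Set (Fin n → ℝ)) : EuclideanSpace ℝ (Fin d) := ⨍ x in Ω, f x

/-- The `τ`-th power of the averaged-modulus Besov semi-norm
`|f|_{B̃_τ^{α,1}(𝒯)} = (Σ_{Ω∈𝒯} (|Ω|^{-α} w₁(f,Ω)_τ)^τ)^{1/τ}`, where
`w₁(f,Ω)_τ^τ = ∫_Ω ‖f - E⃗_Ω‖_{ℓ₂}^τ`; node `(l,j)` is the `j`-th cell at level `l`. -/
noncomputable def besovTildeTau {n d : ℕ} (α τ : ℝ)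
    (f : (Fin n → ℝ) → EuclideanSpace ℝ (Fin d))
    (cells : ℕ → ℕ → Set (Fin n → ℝ)) : ℝ≥0∞ :=
  ∑' (l : ℕ) (j : ℕ), volume (cells l j) ^ (-(α * τ)) *
    ∫⁻ x in cells l j, (‖f x - cellMean f (cells l j)‖₊ : ℝ≥0∞) ^ τ

/-- The `τ`-th power of the tree sparsity `N_τ(f,𝒯) = (Σ_{Ω'≠Ω₀} ‖ψ_{Ω'}‖_p^τ)^{1/τ}`, where
`‖ψ_{Ω'}‖_p^τ = ‖E⃗_{Ω'} - E⃗_Ω‖_{ℓ₂}^τ |Ω'|^{τ/p}` (`Ω` the parent of `Ω'`); the cells at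
level `l+1` with index `j` have parent `(l, j/2)`. -/
noncomputable def sparsityTau {n d : ℕ} (τ p : ℝ)
    (f : (Fin n → ℝ) → EuclideanSpace ℝ (Fin d))
    (cells : ℕ → ℕ → Set (Fin n → ℝ)) : ℝ≥0∞ :=
  ∑' (l : ℕ) (j : ℕ),
    (‖cellMean f (cells (l + 1) j) - cellMean f (cells l (j / 2))‖₊ : ℝ≥0∞) ^ τ *
      volume (cells (l + 1) j) ^ (τ / p)

/-- The piecewise-constant wavelet of the node `(l, j)`:
`ψ_{Ω₀} = 1_{Ω₀} E⃗_{Ω₀}` at the root, and `ψ_{Ω'} = 1_{Ω'}(E⃗_{Ω'} - E⃗_Ω)` for a child `Ω'`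
of `Ω`. -/
noncomputable def treeWavelet {n d : ℕ} (f : (Fin n → ℝ) → EuclideanSpace ℝ (Fin d))
    (cells : ℕ → ℕ → Set (Fin n → ℝ)) :
    ℕ → ℕ → (Fin n → ℝ) → EuclideanSpace ℝ (Fin d)
  | 0, j => (cells 0 j).indicator fun _ => cellMean f (cells 0 j)
  | (l + 1), j => (cells (l + 1) j).indicator
      fun _ => cellMean f (cells (l + 1) j) - cellMean f (cells l (j / 2))

theorem ENNReal.rpow_tsum_le_tsum_rpow {ι : Type*} (a : ι → ℝ≥0∞) {τ : ℝ} (h0 : 0 < τ)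
    (h1 : τ ≤ 1) : (∑' i, a i) ^ τ ≤ ∑' i, a i ^ τ := by
  have hmono : Monotone fun x : ℝ≥0∞ => x ^ τ := fun x y h => ENNReal.rpow_le_rpow h h0.le
  rw [ENNReal.tsum_eq_iSup_sum, hmono.map_iSup_of_continuousAt
    ENNReal.continuous_rpow_const.continuousAt (by simp [ENNReal.zero_rpow_of_pos h0])]
  refine iSup_le fun s => le_trans ?_ (ENNReal.sum_le_tsum s)
  induction s using Finset.cons_induction with
  | empty => simp [ENNReal.zero_rpow_of_pos h0]
  | cons i s _ ih =>
    rw [Finset.sum_cons, Finset.sum_cons]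
    exact (ENNReal.rpow_add_le_add_rpow _ _ h0.le h1).trans (by gcongr)

theorem ENNReal.rpow_neg_mul_le_of_le {A V c : ℝ≥0∞} {s : ℝ} (hs : 0 < s) (hV : V ≠ ⊤)
    (hVA : V ≤ c * A) : A ^ (-s) * V ≤ c ^ s * V ^ (1 - s) := by
  rcases eq_or_ne V 0 with rfl | hV0
  · simp
  rcases eq_or_ne A ⊤ with rfl | hA
  · simp [ENNReal.top_rpow_of_neg (neg_neg_of_pos hs)]
  have hA0 : A ≠ 0 := by rintro rfl; exact hV0 (by simpa using hVA)
  calc A ^ (-s) * V = A ^ (-s) * V ^ s * V ^ (1 - s) := by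
        rw [mul_assoc, ← ENNReal.rpow_add _ _ hV0 hV, add_sub_cancel, ENNReal.rpow_one]
    _ ≤ A ^ (-s) * (c * A) ^ s * V ^ (1 - s) := by gcongr
    _ = c ^ s * V ^ (1 - s) := by
        rw [ENNReal.mul_rpow_of_nonneg _ _ hs.le, mul_left_comm,
          ← ENNReal.rpow_add _ _ hA0 hA, neg_add_cancel, ENNReal.rpow_zero, mul_one]

theorem ENNReal.tsum_tsum_pow_succ_mul_add_le (r : ℝ≥0∞) (c : ℕ → ℝ≥0∞) :
    ∑' (l : ℕ) (k : ℕ), r ^ (k + 1) * c (l + k) ≤ r * (1 - r)⁻¹ * ∑' m, c m := by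
  calc ∑' (l : ℕ) (k : ℕ), r ^ (k + 1) * c (l + k)
      = ∑' k : ℕ, r ^ (k + 1) * ∑' l, c (l + k) := by
        rw [ENNReal.tsum_comm]; simp_rw [ENNReal.tsum_mul_left]
    _ ≤ ∑' k : ℕ, r ^ (k + 1) * ∑' m, c m := by
        refine ENNReal.tsum_le_tsum fun k => mul_le_mul_right ?_ _
        exact ENNReal.tsum_comp_le_tsum_of_injective (add_left_injective k) c
    _ = r * (1 - r)⁻¹ * ∑' m, c m := by
        simp_rw [ENNReal.tsum_mul_right, pow_succ', ENNReal.tsum_mul_left, ENNReal.tsum_geometric]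

theorem setLIntegral_tsum_indicator_const {X ι : Type*} [MeasurableSpace X] [Countable ι]
    (μ : Measure X) {T : ι → Set X} (hT : ∀ i, MeasurableSet (T i)) (c : ι → ℝ≥0∞)
    (S : Set X) :
    ∫⁻ x in S, ∑' i, (T i).indicator (fun _ => c i) x ∂μ = ∑' i, c i * μ (T i ∩ S) := by
  rw [lintegral_tsum fun i => (measurable_const.indicator (hT i)).aemeasurable]
  refine tsum_congr fun i => ?_
  rw [lintegral_indicator_const (hT i), Measure.restrict_apply (hT i)]

structure IsBinaryCellTree {X : Type*} (cells : ℕ → ℕ → Set X) : Prop where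
  root_eq_empty : ∀ j, j ≠ 0 → cells 0 j = ∅
  union_children : ∀ l j, cells (l + 1) (2 * j) ∪ cells (l + 1) (2 * j + 1) = cells l j
  disjoint_children : ∀ l j, Disjoint (cells (l + 1) (2 * j)) (cells (l + 1) (2 * j + 1))

theorem measure_cells_le_pow_mul_ancestor {X : Type*} [MeasurableSpace X] (μ : Measure X)
    {cells : ℕ → ℕ → Set X} {R : ℝ≥0∞}
    (hdecay : ∀ l j, μ (cells (l + 1) j) ≤ R * μ (cells l (j / 2))) (l k j : ℕ) :
    μ (cells (l + k) j) ≤ R ^ k * μ (cells l (j / 2 ^ k)) := by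
  induction k generalizing j with
  | zero => simp
  | succ k ih =>
    calc μ (cells (l + k + 1) j) ≤ R * μ (cells (l + k) (j / 2)) := hdecay _ j
      _ ≤ R * (R ^ k * μ (cells l (j / 2 / 2 ^ k))) := by gcongr; exact ih _
      _ = R ^ (k + 1) * μ (cells l (j / 2 ^ (k + 1))) := by
        rw [Nat.div_div_eq_div_mul, ← pow_succ', ← mul_assoc, ← pow_succ']

namespace IsBinaryCellTree

variable {X : Type*} {cells : ℕ → ℕ → Set X}

theorem subset_parent (h : IsBinaryCellTree cells) (l j : ℕ) :
    cells (l + 1) j ⊆ cells l (j / 2) := by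
  rcases Nat.even_or_odd' j with ⟨m, rfl | rfl⟩
  · rw [Nat.mul_div_cancel_left m two_pos, ← h.union_children l m]
    exact Set.subset_union_left
  · rw [show (2 * m + 1) / 2 = m by omega, ← h.union_children l m]
    exact Set.subset_union_right

theorem subset_ancestor (h : IsBinaryCellTree cells) (l k j : ℕ) :
    cells (l + k) j ⊆ cells l (j / 2 ^ k) := by
  induction k generalizing j with
  | zero => simp
  | succ k ih =>
    refine (h.subset_parent (l + k) j).trans ((ih _).trans_eq ?_)
    rw [Nat.div_div_eq_div_mul, ← pow_succ']

theorem subset_root (h : IsBinaryCellTree cells) (l j : ℕ) : cells l j ⊆ cells 0 0 := by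
  have hsub := h.subset_ancestor 0 l j
  rw [zero_add] at hsub
  rcases eq_or_ne (j / 2 ^ l) 0 with h0 | h0
  · rwa [h0] at hsub
  · rw [h.root_eq_empty _ h0] at hsub
    exact hsub.trans (Set.empty_subset _)

theorem pairwise_disjoint (h : IsBinaryCellTree cells) (l : ℕ) :
    Pairwise fun j j' => Disjoint (cells l j) (cells l j') := by
  induction l with
  | zero =>
    intro j j' hjj'
    rcases eq_or_ne j 0 with rfl | hj
    · simp [h.root_eq_empty j' hjj'.symm]
    · simp [h.root_eq_empty j hj]
  | succ l ih =>
    intro j j' hjj'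
    rcases eq_or_ne (j / 2) (j' / 2) with hpar | hpar
    · rcases Nat.lt_or_gt_of_ne hjj' with hlt | hlt
      · rw [show j = 2 * (j / 2) by omega, show j' = 2 * (j / 2) + 1 by omega]
        exact h.disjoint_children l _
      · rw [show j = 2 * (j / 2) + 1 by omega, show j' = 2 * (j / 2) by omega]
        exact (h.disjoint_children l _).symm
    · exact (ih hpar).mono (h.subset_parent l j) (h.subset_parent l j')

theorem eq_ancestor_of_mem (h : IsBinaryCellTree cells) {l k j j' : ℕ} {x : X}
    (hx : x ∈ cells (l + k) j) (hx' : x ∈ cells l j') : j' = j / 2 ^ k := by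
  by_contra hne
  exact Set.disjoint_left.mp (h.pairwise_disjoint l hne) hx' (h.subset_ancestor l k j hx)

theorem tsum_mul_measure_inter [MeasurableSpace X] (h : IsBinaryCellTree cells)
    (μ : Measure X) (g : ℕ → ℝ≥0∞) (l k j' : ℕ) :
    ∑' j, g j * μ (cells (l + k) j' ∩ cells l j) = g (j' / 2 ^ k) * μ (cells (l + k) j') := by
  rw [tsum_eq_single (j' / 2 ^ k), Set.inter_eq_left.mpr (h.subset_ancestor l k j')]
  intro j hj
  have hempty : cells (l + k) j' ∩ cells l j = ∅ :=
    Set.eq_empty_of_forall_notMem fun x hx => hj (h.eq_ancestor_of_mem hx.1 hx.2)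
  rw [hempty, measure_empty, mul_zero]

theorem tsum_level_rpow_neg_mul_descendants_le [MeasurableSpace X] (h : IsBinaryCellTree cells)
    (μ : Measure X) (hfin : ∀ l j, μ (cells l j) ≠ ⊤) {R : ℝ≥0∞}
    (hdecay : ∀ l j, μ (cells (l + 1) j) ≤ R * μ (cells l (j / 2))) {s : ℝ} (hs : 0 < s)
    (l : ℕ) (a : ℕ × ℕ → ℝ≥0∞) :
    ∑' j, μ (cells l j) ^ (-s) * ∑' i : ℕ × ℕ, a i * μ (cells (l + i.1 + 1) i.2 ∩ cells l j) ≤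
      ∑' i : ℕ × ℕ, (R ^ s) ^ (i.1 + 1) * (a i * μ (cells (l + i.1 + 1) i.2) ^ (1 - s)) := by
  calc ∑' j, μ (cells l j) ^ (-s) *
          ∑' i : ℕ × ℕ, a i * μ (cells (l + i.1 + 1) i.2 ∩ cells l j)
      = ∑' i : ℕ × ℕ, a i * ∑' j, μ (cells l j) ^ (-s) *
          μ (cells (l + i.1 + 1) i.2 ∩ cells l j) := by
        simp_rw [← ENNReal.tsum_mul_left]
        rw [ENNReal.tsum_comm]
        refine tsum_congr fun i => tsum_congr fun j => ?_
        ring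
    _ = ∑' i : ℕ × ℕ, a i * (μ (cells l (i.2 / 2 ^ (i.1 + 1))) ^ (-s) *
          μ (cells (l + i.1 + 1) i.2)) :=
        tsum_congr fun i => congrArg (a i * ·) (h.tsum_mul_measure_inter μ _ l (i.1 + 1) i.2)
    _ ≤ ∑' i : ℕ × ℕ, a i * ((R ^ (i.1 + 1)) ^ s * μ (cells (l + i.1 + 1) i.2) ^ (1 - s)) := by
        refine ENNReal.tsum_le_tsum fun i => mul_le_mul_right ?_ _
        exact ENNReal.rpow_neg_mul_le_of_le hs (hfin _ _)
          (measure_cells_le_pow_mul_ancestor μ hdecay l (i.1 + 1) i.2)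
    _ = ∑' i : ℕ × ℕ, (R ^ s) ^ (i.1 + 1) * (a i * μ (cells (l + i.1 + 1) i.2) ^ (1 - s)) := by
        refine tsum_congr fun i => ?_
        rw [← ENNReal.rpow_natCast_mul, mul_comm _ s, ENNReal.rpow_mul_natCast]
        ring

theorem tsum_rpow_neg_mul_descendants_le [MeasurableSpace X] (h : IsBinaryCellTree cells)
    (μ : Measure X) (hfin : ∀ l j, μ (cells l j) ≠ ⊤) {R : ℝ≥0∞}
    (hdecay : ∀ l j, μ (cells (l + 1) j) ≤ R * μ (cells l (j / 2))) {s : ℝ} (hs : 0 < s)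
    (a : ℕ → ℕ → ℝ≥0∞) :
    ∑' (l : ℕ) (j : ℕ), μ (cells l j) ^ (-s) *
        ∑' i : ℕ × ℕ, a (l + i.1) i.2 * μ (cells (l + i.1 + 1) i.2 ∩ cells l j) ≤
      R ^ s * (1 - R ^ s)⁻¹ * ∑' (m : ℕ) (j : ℕ), a m j * μ (cells (m + 1) j) ^ (1 - s) := by
  calc _ ≤ ∑' (l : ℕ) (i : ℕ × ℕ), (R ^ s) ^ (i.1 + 1) *
          (a (l + i.1) i.2 * μ (cells (l + i.1 + 1) i.2) ^ (1 - s)) :=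
        ENNReal.tsum_le_tsum fun l =>
          h.tsum_level_rpow_neg_mul_descendants_le μ hfin hdecay hs l fun i => a (l + i.1) i.2
    _ = ∑' (l : ℕ) (k : ℕ), (R ^ s) ^ (k + 1) *
          ∑' j, a (l + k) j * μ (cells (l + k + 1) j) ^ (1 - s) := by
        simp_rw [ENNReal.tsum_prod', ENNReal.tsum_mul_left]
    _ ≤ _ := ENNReal.tsum_tsum_pow_succ_mul_add_le _ _

end IsBinaryCellTree

noncomputable def waveletJump {n d : ℕ} (f : (Fin n → ℝ) → EuclideanSpace ℝ (Fin d))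
    (cells : ℕ → ℕ → Set (Fin n → ℝ)) (m j : ℕ) : ℝ≥0∞ :=
  ‖cellMean f (cells (m + 1) j) - cellMean f (cells m (j / 2))‖ₑ

section Wavelet

variable {n d : ℕ} {f : (Fin n → ℝ) → EuclideanSpace ℝ (Fin d)}
  {cells : ℕ → ℕ → Set (Fin n → ℝ)}

theorem treeWavelet_eq_zero_of_notMem {m j : ℕ} {x : Fin n → ℝ} (hx : x ∉ cells m j) :
    treeWavelet f cells m j x = 0 := by
  cases m <;> simp [treeWavelet, hx]

theorem enorm_treeWavelet_succ (m j : ℕ) (x : Fin n → ℝ) :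
    ‖treeWavelet f cells (m + 1) j x‖ₑ =
      (cells (m + 1) j).indicator (fun _ => waveletJump f cells m j) x := by
  by_cases hx : x ∈ cells (m + 1) j <;> simp [treeWavelet, waveletJump, hx]

namespace IsBinaryCellTree

theorem sum_range_treeWavelet_ancestors (h : IsBinaryCellTree cells) {l j : ℕ}
    {x : Fin n → ℝ} (hx : x ∈ cells l j) :
    ∑ m ∈ Finset.range (l + 1), treeWavelet f cells m (j / 2 ^ (l - m)) x =
      cellMean f (cells l j) := by
  induction l generalizing j with
  | zero => simp [treeWavelet, hx]
  | succ l ih =>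
    have hparent : ∀ m ∈ Finset.range (l + 1),
        treeWavelet f cells m (j / 2 ^ (l + 1 - m)) x =
          treeWavelet f cells m (j / 2 / 2 ^ (l - m)) x := by
      intro m hm
      rw [Nat.div_div_eq_div_mul, ← pow_succ', Nat.sub_add_comm (Finset.mem_range_succ_iff.mp hm)]
    rw [Finset.sum_range_succ, Finset.sum_congr rfl hparent, ih (h.subset_parent l j hx),
      Nat.sub_self, pow_zero, Nat.div_one]
    simp [treeWavelet, hx]

theorem hasSum_treeWavelet_ancestors (h : IsBinaryCellTree cells) {l j : ℕ}
    {x : Fin n → ℝ} (hx : x ∈ cells l j) :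
    HasSum (fun q : ℕ × ℕ => if q.1 ≤ l then treeWavelet f cells q.1 q.2 x else 0)
      (cellMean f (cells l j)) := by
  set F : ℕ × ℕ → EuclideanSpace ℝ (Fin d) :=
    fun q => if q.1 ≤ l then treeWavelet f cells q.1 q.2 x else 0
  set ancestor : ℕ → ℕ × ℕ := fun m => (m, j / 2 ^ (l - m))
  have hinj : ancestor.Injective := fun m m' hm => congrArg Prod.fst hm
  refine (hinj.hasSum_iff ?_).mp ?_
  · rintro ⟨m, j'⟩ hq
    simp only [F]
    split_ifs with hml
    · refine treeWavelet_eq_zero_of_notMem fun hx' => hq ⟨m, ?_⟩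
      rw [← Nat.add_sub_cancel' hml] at hx
      rw [h.eq_ancestor_of_mem hx hx']
    · rfl
  · have hfinite : HasSum (F ∘ ancestor) (∑ m ∈ Finset.range (l + 1), F (ancestor m)) :=
      hasSum_sum_of_ne_finset_zero fun m hm => if_neg (by simpa [Nat.lt_succ_iff] using hm)
    rwa [Finset.sum_congr rfl fun m hm => if_pos (Finset.mem_range_succ_iff.mp hm),
      h.sum_range_treeWavelet_ancestors hx] at hfinite

theorem hasSum_treeWavelet_descendants (h : IsBinaryCellTree cells) {l j : ℕ}
    {x : Fin n → ℝ} (hx : x ∈ cells l j)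
    (hsum : HasSum (fun q : ℕ × ℕ => treeWavelet f cells q.1 q.2 x) (f x)) :
    HasSum (fun i : ℕ × ℕ => treeWavelet f cells (l + i.1 + 1) i.2 x)
      (f x - cellMean f (cells l j)) := by
  set descendant : ℕ × ℕ → ℕ × ℕ := fun i => (l + i.1 + 1, i.2)
  have hinj : descendant.Injective := fun i i' hi => by
    simp only [descendant, Prod.mk.injEq] at hi
    exact Prod.ext (by omega) hi.2
  have htail := (hinj.hasSum_iff ?_).mpr (hsum.sub (h.hasSum_treeWavelet_ancestors (f := f) hx))
  · convert htail using 2 with i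
    simp [descendant]
  · rintro ⟨m, j'⟩ hq
    have hml : m ≤ l := by
      by_contra hlm
      exact hq ⟨(m - l - 1, j'), by simp only [descendant]; congr 1; omega⟩
    simp [hml]

theorem enorm_sub_cellMean_rpow_le (h : IsBinaryCellTree cells) {τ : ℝ} (hτ0 : 0 < τ)
    (hτ1 : τ ≤ 1) {l j : ℕ} {x : Fin n → ℝ} (hx : x ∈ cells l j)
    (hsum : HasSum (fun q : ℕ × ℕ => treeWavelet f cells q.1 q.2 x) (f x)) :
    ‖f x - cellMean f (cells l j)‖ₑ ^ τ ≤
      ∑' i : ℕ × ℕ, (cells (l + i.1 + 1) i.2).indicator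
        (fun _ => waveletJump f cells (l + i.1) i.2 ^ τ) x := by
  calc ‖f x - cellMean f (cells l j)‖ₑ ^ τ
      ≤ (∑' i : ℕ × ℕ, ‖treeWavelet f cells (l + i.1 + 1) i.2 x‖ₑ) ^ τ := by
        gcongr
        exact (h.hasSum_treeWavelet_descendants hx hsum).enorm_le_of_bounded
          ENNReal.summable.hasSum fun _ => le_rfl
    _ ≤ ∑' i : ℕ × ℕ, ‖treeWavelet f cells (l + i.1 + 1) i.2 x‖ₑ ^ τ :=
        ENNReal.rpow_tsum_le_tsum_rpow _ hτ0 hτ1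
    _ = _ := by
        refine tsum_congr fun i => ?_
        rw [enorm_treeWavelet_succ]
        by_cases hxi : x ∈ cells (l + i.1 + 1) i.2 <;>
          simp [hxi, ENNReal.zero_rpow_of_pos hτ0]

theorem setLIntegral_enorm_sub_cellMean_rpow_le (h : IsBinaryCellTree cells)
    (hmeas : ∀ l j, MeasurableSet (cells l j)) {τ : ℝ} (hτ0 : 0 < τ) (hτ1 : τ ≤ 1)
    (hsum : ∀ x ∈ cells 0 0, HasSum (fun q : ℕ × ℕ => treeWavelet f cells q.1 q.2 x) (f x))
    (l j : ℕ) :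
    ∫⁻ x in cells l j, ‖f x - cellMean f (cells l j)‖ₑ ^ τ ≤
      ∑' i : ℕ × ℕ, waveletJump f cells (l + i.1) i.2 ^ τ *
        volume (cells (l + i.1 + 1) i.2 ∩ cells l j) :=
  (setLIntegral_mono' (hmeas l j) fun x hx =>
    h.enorm_sub_cellMean_rpow_le hτ0 hτ1 hx (hsum x (h.subset_root l j hx))).trans_eq
    (setLIntegral_tsum_indicator_const volume (fun _ => hmeas _ _) _ _)

end IsBinaryCellTree

end Wavelet

theorem stmt_9 (ρ α p τ : ℝ) (hρ0 : 0 < ρ) (hρ1 : ρ < 1) (hα : 0 < α)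
    (hτ0 : 0 < τ) (hτ1 : τ ≤ 1) (hτ : 1 / τ = α + 1 / p) :
    ∃ C : ℝ, 0 < C ∧
      ∀ (n d : ℕ) (cells : ℕ → ℕ → Set (Fin n → ℝ))
        (f : (Fin n → ℝ) → EuclideanSpace ℝ (Fin d)),
        (∀ l j, MeasurableSet (cells l j)) →
        (∀ j, j ≠ 0 → cells 0 j = ∅) →
        (∀ l j, cells (l + 1) (2 * j) ∪ cells (l + 1) (2 * j + 1) = cells l j) →
        (∀ l j, Disjoint (cells (l + 1) (2 * j)) (cells (l + 1) (2 * j + 1))) →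
        (∀ l j, volume (cells (l + 1) j) ≤ ENNReal.ofReal ρ * volume (cells l (j / 2))) →
        volume (cells 0 0) < ⊤ →
        IntegrableOn f (cells 0 0) →
        (∀ x ∈ cells 0 0,
          HasSum (fun q : ℕ × ℕ => treeWavelet f cells q.1 q.2 x) (f x)) →
        besovTildeTau α τ f cells ≤ ENNReal.ofReal C * sparsityTau τ p f cells := by
  have hs : 0 < α * τ := mul_pos hα hτ0
  have hρs : 0 < ρ ^ (α * τ) := Real.rpow_pos_of_pos hρ0 _
  have hgap : 0 < 1 - ρ ^ (α * τ) := sub_pos.mpr (Real.rpow_lt_one hρ0.le hρ1 hs)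
  have hexp : 1 - α * τ = τ / p := by
    have := congrArg (τ * ·) hτ
    simp only [mul_one_div_cancel hτ0.ne', mul_add, mul_one_div] at this
    linarith
  refine ⟨ρ ^ (α * τ) * (1 - ρ ^ (α * τ))⁻¹, by positivity, ?_⟩
  intro n d cells f hmeas hroot hunion hdisj hdecay hfin _ hsum
  have htree : IsBinaryCellTree cells := ⟨hroot, hunion, hdisj⟩
  have hfin' : ∀ l j, volume (cells l j) ≠ ⊤ := fun l j =>
    ((measure_mono (htree.subset_root l j)).trans_lt hfin).ne
  rw [ENNReal.ofReal_mul hρs.le, ENNReal.ofReal_inv_of_pos hgap, ENNReal.ofReal_sub _ hρs.le,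
    ENNReal.ofReal_one, ← ENNReal.ofReal_rpow_of_pos hρ0]
  calc besovTildeTau α τ f cells
      ≤ ∑' (l : ℕ) (j : ℕ), volume (cells l j) ^ (-(α * τ)) *
          ∑' i : ℕ × ℕ, waveletJump f cells (l + i.1) i.2 ^ τ *
            volume (cells (l + i.1 + 1) i.2 ∩ cells l j) :=
        ENNReal.tsum_le_tsum fun l => ENNReal.tsum_le_tsum fun j => mul_le_mul_right
          (htree.setLIntegral_enorm_sub_cellMean_rpow_le hmeas hτ0 hτ1 hsum l j) _
    _ ≤ _ := htree.tsum_rpow_neg_mul_descendants_le volume hfin' hdecay hs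
          fun m j => waveletJump f cells m j ^ τ
    _ = _ := by rw [hexp]; rfl
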